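/- arXiv:1902.07578 — 2 statements merged into one kernel-verified Lean document; each statement's English description precedes it below -/
import Mathlib

section
/- A homeomorphism f of a compact metric space X has the two-sided limit shadowing property if and only if both f and f^{-1} have the limit shadowing property and W^u(x) ∩ W^s(y) ≠ ∅ for every x,y ∈ X. -/
open Filter Metric Set Topology

variable {X : Type*} [MetricSpace X]

/-- `f^k x` for `k : ℤ`, where `f` is a homeomorphism. -/
def iterZ (f : X ≃ₜ X) (k : ℤ) (x : X) : X :=
  if 0 ≤ k then (⇑f)^[k.toNat] x else (⇑f.symm)^[(-k).toNat] x

/-- The classical shadowing property. -/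
def Shadowing (f : X ≃ₜ X) : Prop :=
  ∀ ε > (0:ℝ), ∃ δ > (0:ℝ), ∀ x : ℤ → X,
    (∀ k : ℤ, dist (f (x k)) (x (k+1)) < δ) →
    ∃ z : X, ∀ k : ℤ, dist (iterZ f k z) (x k) < ε

/-- The L-shadowing property. -/
def LShadowing (f : X ≃ₜ X) : Prop :=
  ∀ ε > (0:ℝ), ∃ δ > (0:ℝ), ∀ x : ℤ → X,
    (∀ k : ℤ, dist (f (x k)) (x (k+1)) ≤ δ) →
    Tendsto (fun k : ℤ => dist (f (x k)) (x (k+1))) cofinite (nhds 0) →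
    ∃ z : X, (∀ k : ℤ, dist (iterZ f k z) (x k) ≤ ε) ∧
      Tendsto (fun k : ℤ => dist (iterZ f k z) (x k)) cofinite (nhds 0)

/-- The stable set of `x`. -/
def stableSet (f : X ≃ₜ X) (x : X) : Set X :=
  {y | Tendsto (fun n : ℕ => dist ((⇑f)^[n] x) ((⇑f)^[n] y)) atTop (nhds 0)}

/-- The unstable set of `x`. -/
def unstableSet (f : X ≃ₜ X) (x : X) : Set X := stableSet f.symm x

/-- The local stable set of size `ε` of `x`. -/
def localStable (f : X ≃ₜ X) (ε : ℝ) (x : X) : Set X :=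
  {y | ∀ n : ℕ, dist ((⇑f)^[n] x) ((⇑f)^[n] y) ≤ ε}

/-- The local unstable set of size `ε` of `x`. -/
def localUnstable (f : X ≃ₜ X) (ε : ℝ) (x : X) : Set X := localStable f.symm ε x

/-- `V^s_ε(x) = W^s(x) ∩ W^s_ε(x)`. -/
def Vs (f : X ≃ₜ X) (ε : ℝ) (x : X) : Set X := stableSet f x ∩ localStable f ε x

/-- `V^u_ε(x) = W^u(x) ∩ W^u_ε(x)`. -/
def Vu (f : X ≃ₜ X) (ε : ℝ) (x : X) : Set X := unstableSet f x ∩ localUnstable f ε x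

/-- The limit shadowing property. -/
def LimitShadowing (f : X ≃ₜ X) : Prop :=
  ∀ x : ℕ → X, Tendsto (fun k : ℕ => dist (f (x k)) (x (k+1))) atTop (nhds 0) →
    ∃ y : X, Tendsto (fun k : ℕ => dist ((⇑f)^[k] y) (x k)) atTop (nhds 0)

/-- The two-sided limit shadowing property. -/
def TwoSidedLimitShadowing (f : X ≃ₜ X) : Prop :=
  ∀ x : ℤ → X, Tendsto (fun k : ℤ => dist (f (x k)) (x (k+1))) cofinite (nhds 0) →
    ∃ y : X, Tendsto (fun k : ℤ => dist (iterZ f k y) (x k)) cofinite (nhds 0)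

/-- A non-wandering point. -/
def NonWandering (f : X ≃ₜ X) (x : X) : Prop :=
  ∀ U : Set X, IsOpen U → x ∈ U → ∃ k : ℕ, 0 < k ∧ ((⇑f)^[k] '' U ∩ U).Nonempty

/-- The non-wandering set. -/
def omegaSet (f : X ≃ₜ X) : Set X := {x | NonWandering f x}

/-- Topologically mixing. -/
def TopMixing (f : X ≃ₜ X) : Prop :=
  ∀ U V : Set X, IsOpen U → IsOpen V → U.Nonempty → V.Nonempty →
    ∃ n : ℕ, 0 < n ∧ ∀ k ≥ n, ((⇑f)^[k] '' U ∩ V).Nonempty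

/-- `f` is expansive on the set `A` (as a subsystem). -/
def ExpansiveOn (f : X ≃ₜ X) (A : Set X) : Prop :=
  ∃ c > (0:ℝ), ∀ x ∈ A, ∀ y ∈ A,
    (∀ k : ℤ, dist (iterZ f k x) (iterZ f k y) ≤ c) → x = y

/-- The dynamical ball `Γ_δ(x)`. -/
def dynBall (f : X ≃ₜ X) (δ : ℝ) (x : X) : Set X :=
  {y | ∀ k : ℤ, dist (iterZ f k x) (iterZ f k y) ≤ δ}

/-- There is a periodic `ε`-pseudo-orbit containing both `x` and `y`. -/
def ChainRel (f : X ≃ₜ X) (ε : ℝ) (x y : X) : Prop :=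
  ∃ (n : ℕ) (z : ℕ → X), 0 < n ∧ z 0 = x ∧ z n = x ∧ (∃ i ≤ n, z i = y) ∧
    ∀ i < n, dist (f (z i)) (z (i+1)) < ε

/-- The chain recurrent class of `x`. -/
def chainClass (f : X ≃ₜ X) (x : X) : Set X := {y | ∀ ε > (0:ℝ), ChainRel f ε x y}

/-- `h` is a semiconjugacy from `g` on `K` to the full shift on two symbols. -/
def SemiConjShift (g : X → X) (K : Set X) (h : X → (ℤ → Bool)) : Prop :=
  ContinuousOn h K ∧ (∀ s : ℤ → Bool, ∃ p ∈ K, h p = s) ∧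
    ∀ p ∈ K, h (g p) = fun i => h p (i + 1)

/-- `f` admits arbitrarily small topological semi-horseshoes inside `C`. -/
def SmallHorseshoes (f : X ≃ₜ X) (C : Set X) : Prop :=
  ∀ ε > (0:ℝ), ∃ N : ℕ, 1 ≤ N ∧ ∃ K : Set X, K ⊆ C ∧ IsCompact K ∧
    (⇑f)^[N] '' K = K ∧ (∀ k : ℤ, Metric.diam (iterZ f k '' K) ≤ ε) ∧
    ∃ h : X → (ℤ → Bool), SemiConjShift ((⇑f)^[N]) K h

/-! A two-sided sequence is a limit pseudo-orbit of `f` exactly when its forward half is one of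
`f` and its backward half one of `f⁻¹` (uniform continuity of `f` and `f⁻¹` converts between the
two ways of measuring the jumps on the negative side), and `z` two-sided limit shadows it exactly
when `z` limit shadows the forward half under `f` and the backward half under `f⁻¹`. If `y` and
`w` shadow the two halves, any `z ∈ W^u(w) ∩ W^s(y)` shadows both. Conversely, gluing a one-sided
pseudo-orbit to an arbitrary orbit, or the backward orbit of `x` to the forward orbit of `y`,
yields two-sided limit pseudo-orbits whose shadows give limit shadowing and a point of
`W^u(x) ∩ W^s(y)`. -/

section Asymptotic

variable {ι : Type*} {l : Filter ι} {a b c : ι → X}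

theorem tendsto_dist_comm (h : Tendsto (fun i => dist (a i) (b i)) l (𝓝 0)) :
    Tendsto (fun i => dist (b i) (a i)) l (𝓝 0) := by
  simpa only [dist_comm] using h

theorem tendsto_dist_trans (hab : Tendsto (fun i => dist (a i) (b i)) l (𝓝 0))
    (hbc : Tendsto (fun i => dist (b i) (c i)) l (𝓝 0)) :
    Tendsto (fun i => dist (a i) (c i)) l (𝓝 0) :=
  tendsto_uniformity_iff_dist_tendsto_zero.1 <|
    (tendsto_uniformity_iff_dist_tendsto_zero.2 hab).uniformity_trans
      (tendsto_uniformity_iff_dist_tendsto_zero.2 hbc)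

theorem UniformContinuous.tendsto_dist_comp {g : X → X} (hg : UniformContinuous g)
    (h : Tendsto (fun i => dist (a i) (b i)) l (𝓝 0)) :
    Tendsto (fun i => dist (g (a i)) (g (b i))) l (𝓝 0) :=
  tendsto_uniformity_iff_dist_tendsto_zero.1 <|
    Tendsto.comp hg (tendsto_uniformity_iff_dist_tendsto_zero.2 h :
      Tendsto (fun i => (a i, b i)) l (uniformity X))

theorem tendsto_dist_symm_apply_iff {f : X ≃ₜ X} (hf : UniformContinuous f)
    (hf' : UniformContinuous f.symm) :
    Tendsto (fun i => dist (f.symm (a i)) (b i)) l (𝓝 0) ↔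
      Tendsto (fun i => dist (f (b i)) (a i)) l (𝓝 0) := by
  constructor <;> intro h
  · simpa only [Homeomorph.apply_symm_apply, dist_comm] using hf.tendsto_dist_comp h
  · simpa only [Homeomorph.symm_apply_apply, dist_comm] using hf'.tendsto_dist_comp h

end Asymptotic

theorem tendsto_cofinite_int_iff {α : Type*} {u : ℤ → α} {l : Filter α} :
    Tendsto u cofinite l ↔
      Tendsto (fun n : ℕ => u n) atTop l ∧ Tendsto (fun n : ℕ => u (-n)) atTop l := by
  have hneg : map (fun n : ℕ => -(n : ℤ)) atTop = atBot := by
    rw [show (fun n : ℕ => -(n : ℤ)) = Neg.neg ∘ ((↑) : ℕ → ℤ) from rfl, ← Filter.map_map,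
      Nat.map_cast_int_atTop, map_neg_atTop]
  rw [Int.cofinite_eq, tendsto_sup, ← Nat.map_cast_int_atTop, ← hneg, tendsto_map'_iff,
    tendsto_map'_iff, and_comm]
  rfl

-- `v 0` is never used: the value at `0` is `u 0`.
def twoSidedSeq {α : Type*} (u v : ℕ → α) (k : ℤ) : α :=
  if 0 ≤ k then u k.toNat else v (-k).toNat

section TwoSidedSeq

variable {α : Type*} (u v : ℕ → α)

theorem twoSidedSeq_natCast (n : ℕ) : twoSidedSeq u v n = u n := by
  simp [twoSidedSeq]

theorem twoSidedSeq_neg_natCast {n : ℕ} (hn : n ≠ 0) : twoSidedSeq u v (-n) = v n := by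
  simp [twoSidedSeq, hn]

theorem twoSidedSeq_neg_eventuallyEq : (fun n : ℕ => twoSidedSeq u v (-n)) =ᶠ[atTop] v := by
  filter_upwards [eventually_ne_atTop 0] with n hn using twoSidedSeq_neg_natCast u v hn

end TwoSidedSeq

theorem iterZ_natCast (f : X ≃ₜ X) (n : ℕ) (x : X) : iterZ f n x = (⇑f)^[n] x :=
  twoSidedSeq_natCast (fun n => (⇑f)^[n] x) (fun n => (⇑f.symm)^[n] x) n

theorem iterZ_neg_natCast (f : X ≃ₜ X) (n : ℕ) (x : X) : iterZ f (-n) x = (⇑f.symm)^[n] x := by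
  rcases eq_or_ne n 0 with rfl | hn
  · simp [iterZ]
  · exact twoSidedSeq_neg_natCast (fun n => (⇑f)^[n] x) (fun n => (⇑f.symm)^[n] x) hn

def IsLimitPseudoOrbit (g : X → X) (x : ℕ → X) : Prop :=
  Tendsto (fun k => dist (g (x k)) (x (k + 1))) atTop (𝓝 0)

def LimitShadows (g : X → X) (y : X) (x : ℕ → X) : Prop :=
  Tendsto (fun k => dist (g^[k] y) (x k)) atTop (𝓝 0)

def IsTwoSidedLimitPseudoOrbit (f : X ≃ₜ X) (x : ℤ → X) : Prop :=
  Tendsto (fun k => dist (f (x k)) (x (k + 1))) cofinite (𝓝 0)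

def TwoSidedLimitShadows (f : X ≃ₜ X) (y : X) (x : ℤ → X) : Prop :=
  Tendsto (fun k => dist (iterZ f k y) (x k)) cofinite (𝓝 0)

theorem isLimitPseudoOrbit_iterate (g : X → X) (p : X) :
    IsLimitPseudoOrbit g (fun n => g^[n] p) := by
  simpa only [IsLimitPseudoOrbit, Function.iterate_succ_apply', dist_self] using
    tendsto_const_nhds

theorem IsLimitPseudoOrbit.congr {g : X → X} {u v : ℕ → X} (hu : IsLimitPseudoOrbit g u)
    (huv : u =ᶠ[atTop] v) : IsLimitPseudoOrbit g v := by
  refine hu.congr' ?_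
  filter_upwards [huv, (tendsto_add_atTop_nat 1).eventually huv] with n h₀ h₁
  rw [h₀, h₁]

theorem LimitShadows.congr {g : X → X} {y : X} {u v : ℕ → X} (hu : LimitShadows g y u)
    (huv : u =ᶠ[atTop] v) : LimitShadows g y v := by
  refine hu.congr' ?_
  filter_upwards [huv] with n hn
  rw [hn]

theorem mem_stableSet_iff_limitShadows {f : X ≃ₜ X} {y z : X} :
    z ∈ stableSet f y ↔ LimitShadows f z (fun n => (⇑f)^[n] y) :=
  ⟨tendsto_dist_comm, tendsto_dist_comm⟩

theorem LimitShadows.of_mem_stableSet {f : X ≃ₜ X} {x : ℕ → X} {y z : X}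
    (hy : LimitShadows f y x) (hz : z ∈ stableSet f y) : LimitShadows f z x :=
  tendsto_dist_trans (mem_stableSet_iff_limitShadows.1 hz) hy

section TwoSided

variable {f : X ≃ₜ X}

theorem isTwoSidedLimitPseudoOrbit_iff (hf : UniformContinuous f)
    (hf' : UniformContinuous f.symm) {x : ℤ → X} :
    IsTwoSidedLimitPseudoOrbit f x ↔
      IsLimitPseudoOrbit f (fun n : ℕ => x n) ∧
        IsLimitPseudoOrbit f.symm (fun n : ℕ => x (-n)) := by
  rw [IsTwoSidedLimitPseudoOrbit, tendsto_cofinite_int_iff,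
    ← tendsto_add_atTop_iff_nat (f := fun n : ℕ => dist (f (x (-n))) (x (-n + 1))) 1]
  refine and_congr (by simp only [IsLimitPseudoOrbit, Nat.cast_succ]) ?_
  rw [IsLimitPseudoOrbit, tendsto_dist_symm_apply_iff hf hf']
  have hshift (n : ℕ) : -((n : ℤ) + 1) + 1 = -n := by ring
  simp only [Nat.cast_succ, hshift]

theorem twoSidedLimitShadows_iff {y : X} {x : ℤ → X} :
    TwoSidedLimitShadows f y x ↔
      LimitShadows f y (fun n : ℕ => x n) ∧ LimitShadows f.symm y (fun n : ℕ => x (-n)) := by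
  simp only [TwoSidedLimitShadows, tendsto_cofinite_int_iff, iterZ_natCast, iterZ_neg_natCast]
  rfl

theorem TwoSidedLimitShadowing.exists_limitShadows (h : TwoSidedLimitShadowing f)
    (hf : UniformContinuous f) (hf' : UniformContinuous f.symm) {u v : ℕ → X}
    (hu : IsLimitPseudoOrbit f u) (hv : IsLimitPseudoOrbit f.symm v) :
    ∃ y, LimitShadows f y u ∧ LimitShadows f.symm y v := by
  have hx : IsTwoSidedLimitPseudoOrbit f (twoSidedSeq u v) :=
    (isTwoSidedLimitPseudoOrbit_iff hf hf').2
      ⟨by simpa only [twoSidedSeq_natCast] using hu,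
        hv.congr (twoSidedSeq_neg_eventuallyEq u v).symm⟩
  obtain ⟨y, hy⟩ := h _ hx
  obtain ⟨hyu, hyv⟩ := twoSidedLimitShadows_iff.1 hy
  exact ⟨y, by simpa only [twoSidedSeq_natCast] using hyu,
    hyv.congr (twoSidedSeq_neg_eventuallyEq u v)⟩

theorem twoSidedLimitShadowing_of_limitShadowing (hf : UniformContinuous f)
    (hf' : UniformContinuous f.symm) (h : LimitShadowing f) (h' : LimitShadowing f.symm)
    (hW : ∀ x y : X, (unstableSet f x ∩ stableSet f y).Nonempty) : TwoSidedLimitShadowing f := by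
  intro x hx
  obtain ⟨hfwd, hbwd⟩ := (isTwoSidedLimitPseudoOrbit_iff hf hf').1 hx
  obtain ⟨y, hy⟩ := h _ hfwd
  obtain ⟨w, hw⟩ := h' _ hbwd
  obtain ⟨z, hzw, hzy⟩ := hW w y
  exact ⟨z, twoSidedLimitShadows_iff.2
    ⟨LimitShadows.of_mem_stableSet hy hzy, LimitShadows.of_mem_stableSet hw hzw⟩⟩

end TwoSided

/-- characterization of two-sided limit shadowing. -/
theorem twoSided_limit_shadowing_iff [CompactSpace X] (f : X ≃ₜ X) :
    TwoSidedLimitShadowing f ↔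
      (LimitShadowing f ∧ LimitShadowing f.symm ∧
        ∀ x y : X, (unstableSet f x ∩ stableSet f y).Nonempty) := by
  have hf := CompactSpace.uniformContinuous_of_continuous f.continuous
  have hf' := CompactSpace.uniformContinuous_of_continuous f.symm.continuous
  refine ⟨fun h => ⟨fun x hx => ?_, fun x hx => ?_, fun x y => ?_⟩,
    fun ⟨h₁, h₂, hW⟩ => twoSidedLimitShadowing_of_limitShadowing hf hf' h₁ h₂ hW⟩
  · exact (h.exists_limitShadows hf hf' hx (isLimitPseudoOrbit_iterate _ (x 0))).imp
      fun _ => And.left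
  · exact (h.exists_limitShadows hf hf' (isLimitPseudoOrbit_iterate _ (x 0)) hx).imp
      fun _ => And.right
  · obtain ⟨z, hy, hx⟩ := h.exists_limitShadows hf hf' (isLimitPseudoOrbit_iterate f y)
      (isLimitPseudoOrbit_iterate f.symm x)
    exact ⟨z, mem_stableSet_iff_limitShadows.2 hx, mem_stableSet_iff_limitShadows.2 hy⟩
end

section
/- If f is a homeomorphism of a compact metric space with the L-shadowing property, then for every ε>0 there exists δ>0 such that for any x∈X, if V^s_ε(x) ∩ V^u_ε(x) = {x} then Γ_δ(x) = {x}, where Γ_δ(x) = {y : d(f^n(x),f^n(y)) ≤ δ for all n∈ℤ} is the dynamical ball. -/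
open Filter Metric Set Topology

variable {X : Type*} [MetricSpace X]

section Aux

variable {X : Type*} [MetricSpace X]

private lemma iter_continuous (g : X → X) (hg : Continuous g) : ∀ n : ℕ, Continuous (g^[n]) := by
  intro n
  induction n with
  | zero => simpa using continuous_id
  | succ n ih => rw [Function.iterate_succ]; exact ih.comp hg

private lemma iterZ_ofNat (f : X ≃ₜ X) (n : ℕ) (x : X) : iterZ f (n : ℤ) x = (⇑f)^[n] x := by
  simp [iterZ]

private lemma iterZ_neg_ofNat (f : X ≃ₜ X) (n : ℕ) (x : X) :
    iterZ f (-(n : ℤ)) x = (⇑f.symm)^[n] x := by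
  rcases Nat.eq_zero_or_pos n with rfl | hn
  · simp [iterZ]
  · have h1 : ¬ (0 ≤ -(n : ℤ)) := by omega
    have h2 : (-(-(n:ℤ))).toNat = n := by omega
    simp only [iterZ, h1, if_false, h2]

private lemma iterZ_zero (f : X ≃ₜ X) (x : X) : iterZ f 0 x = x := by
  simp [iterZ]

private lemma iterZ_succ (f : X ≃ₜ X) (k : ℤ) (x : X) :
    iterZ f (k + 1) x = f (iterZ f k x) := by
  by_cases h : 0 ≤ k
  · have h1 : 0 ≤ k + 1 := by omega
    have h2 : (k+1).toNat = k.toNat + 1 := by omega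
    simp only [iterZ, h, h1, if_true, h2]
    rw [Function.iterate_succ_apply']
  · by_cases h3 : k = -1
    · subst h3
      have e1 : (-1 : ℤ) + 1 = 0 := by norm_num
      rw [e1, iterZ_zero]
      have h4 : ¬ (0 ≤ (-1 : ℤ)) := by norm_num
      have h5 : (-(-1 : ℤ)).toNat = 1 := by norm_num
      simp only [iterZ, h4, if_false, h5]
      simp
    · have h4 : ¬ (0 ≤ k + 1) := by omega
      have h5 : (-k).toNat = (-(k+1)).toNat + 1 := by omega
      simp only [iterZ, h, h4, if_false, h5]
      rw [Function.iterate_succ_apply' (⇑f.symm) _ x]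
      exact (f.apply_symm_apply _).symm

private lemma iterZ_pred (f : X ≃ₜ X) (k : ℤ) (x : X) :
    iterZ f (k - 1) x = f.symm (iterZ f k x) := by
  have h := iterZ_succ f (k-1) x
  have h2 : k - 1 + 1 = k := by ring
  rw [h2] at h
  rw [h, Homeomorph.symm_apply_apply]

private lemma iterZ_add (f : X ≃ₜ X) (j k : ℤ) (x : X) :
    iterZ f (j + k) x = iterZ f j (iterZ f k x) := by
  induction j using Int.induction_on with
  | zero => rw [zero_add, iterZ_zero]
  | succ n ih =>
      have h : (n : ℤ) + 1 + k = ((n : ℤ) + k) + 1 := by ring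
      rw [h, iterZ_succ, ih, ← iterZ_succ]
  | pred n ih =>
      have h : -(n : ℤ) - 1 + k = (-(n:ℤ) + k) - 1 := by ring
      rw [h, iterZ_pred, ih, ← iterZ_pred]

private lemma iterZ_symm (f : X ≃ₜ X) (k : ℤ) (x : X) :
    iterZ f.symm k x = iterZ f (-k) x := by
  rcases k with n | n
  · rw [Int.ofNat_eq_natCast, iterZ_ofNat, iterZ_neg_ofNat]
  · rw [Int.negSucc_eq]
    have h1 : -((n : ℤ) + 1) = -((n+1 : ℕ) : ℤ) := by push_cast; ring
    have h2 : -(-((n : ℤ) + 1)) = ((n+1 : ℕ) : ℤ) := by push_cast; ring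
    rw [h1, iterZ_neg_ofNat, ← h1, h2, iterZ_ofNat]
    have h3 : ⇑f.symm.symm = ⇑f := by rw [Homeomorph.symm_symm]
    rw [h3]

private lemma continuous_iterZ (f : X ≃ₜ X) (k : ℤ) : Continuous (iterZ f k) := by
  have hrfl : iterZ f k = fun x : X =>
      if 0 ≤ k then (⇑f)^[k.toNat] x else (⇑f.symm)^[(-k).toNat] x := rfl
  rw [hrfl]
  by_cases h : 0 ≤ k
  · simp only [h, if_true]
    exact iter_continuous _ f.continuous _
  · simp only [h, if_false]
    exact iter_continuous _ f.symm.continuous _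

end Aux
section Aux2

variable {X : Type*} [MetricSpace X]

/-- A function on `ℤ` that vanishes outside a bounded interval tends to `0` along `cofinite`. -/
private lemma tendsto_cofinite_of_bounded_support {g : ℤ → ℝ} (lo hi : ℤ)
    (h : ∀ k : ℤ, k < lo ∨ hi < k → g k = 0) : Tendsto g cofinite (nhds 0) := by
  have hev : ∀ᶠ k in (cofinite : Filter ℤ), (fun _ : ℤ => (0:ℝ)) k = g k := by
    rw [Filter.eventually_cofinite]
    apply Set.Finite.subset (Set.finite_Icc lo hi)
    intro k hk
    simp only [Set.mem_setOf_eq] at hk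
    simp only [Set.mem_Icc]
    by_contra hc
    push_neg at hc
    rcases le_or_gt lo k with h1 | h1
    · exact hk ((h k (Or.inr (hc h1))).symm)
    · exact hk ((h k (Or.inl h1)).symm)
  exact Filter.Tendsto.congr' hev tendsto_const_nhds

private lemma tendsto_atTop_of_cofinite {g : ℤ → ℝ} {l : Filter ℝ}
    (h : Tendsto g cofinite l) : Tendsto g atTop l :=
  h.mono_left (by rw [Int.cofinite_eq]; exact le_sup_right)

private lemma tendsto_atBot_of_cofinite {g : ℤ → ℝ} {l : Filter ℝ}
    (h : Tendsto g cofinite l) : Tendsto g atBot l :=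
  h.mono_left (by rw [Int.cofinite_eq]; exact le_sup_left)

/-- rank extraction at -∞ -/
private lemma rank_atBot {g : ℤ → ℝ} (h : Tendsto g atBot (nhds 0)) {τ : ℝ} (hτ : 0 < τ) :
    ∃ B : ℤ, B ≤ 0 ∧ ∀ k ≤ B, |g k| ≤ τ := by
  have := (Metric.tendsto_nhds.mp h) τ hτ
  rw [Filter.eventually_atBot] at this
  obtain ⟨B, hB⟩ := this
  refine ⟨min B 0, min_le_right _ _, fun k hk => ?_⟩
  have := hB k (le_trans hk (min_le_left _ _))
  rw [Real.dist_eq, sub_zero] at this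
  exact this.le

private lemma rank_atTop {g : ℤ → ℝ} (h : Tendsto g atTop (nhds 0)) {τ : ℝ} (hτ : 0 < τ) :
    ∃ B : ℤ, 1 ≤ B ∧ ∀ k, B ≤ k → |g k| ≤ τ := by
  have := (Metric.tendsto_nhds.mp h) τ hτ
  rw [Filter.eventually_atTop] at this
  obtain ⟨B, hB⟩ := this
  refine ⟨max B 1, le_max_right _ _, fun k hk => ?_⟩
  have := hB k (le_trans (le_max_left _ _) hk)
  rw [Real.dist_eq, sub_zero] at this
  exact this.le

/-- Uniform modulus for all `iterZ f k`, `|k| ≤ W`. -/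
private lemma window_modulus [CompactSpace X] (f : X ≃ₜ X) (W : ℕ) {τ : ℝ} (hτ : 0 < τ) :
    ∃ θ > 0, ∀ u v : X, dist u v ≤ θ → ∀ k : ℤ, k.natAbs ≤ W →
      dist (iterZ f k u) (iterZ f k v) ≤ τ := by
  have uc : ∀ k : ℤ, ∃ θ > 0, ∀ u v : X, dist u v ≤ θ →
      dist (iterZ f k u) (iterZ f k v) ≤ τ := by
    intro k
    have h := CompactSpace.uniformContinuous_of_continuous (continuous_iterZ f k)
    rw [Metric.uniformContinuous_iff] at h
    obtain ⟨θ, hθ, h⟩ := h τ hτ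
    exact ⟨θ/2, by positivity, fun u v huv => (h (lt_of_le_of_lt huv (by linarith))).le⟩
  induction W with
  | zero =>
      refine ⟨τ, hτ, fun u v huv k hk => ?_⟩
      have : k = 0 := by omega
      subst this
      rw [iterZ_zero, iterZ_zero]
      exact huv
  | succ W ih =>
      obtain ⟨θ₀, hθ₀, h₀⟩ := ih
      obtain ⟨θ₁, hθ₁, h₁⟩ := uc ((W+1 : ℕ) : ℤ)
      obtain ⟨θ₂, hθ₂, h₂⟩ := uc (-((W+1 : ℕ) : ℤ))
      refine ⟨min θ₀ (min θ₁ θ₂), by positivity, fun u v huv k hk => ?_⟩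
      by_cases hk' : k.natAbs ≤ W
      · exact h₀ u v (le_trans huv (min_le_left _ _)) k hk'
      · have : k = ((W+1 : ℕ) : ℤ) ∨ k = -((W+1 : ℕ) : ℤ) := by omega
        rcases this with rfl | rfl
        · exact h₁ u v (le_trans huv (le_trans (min_le_right _ _) (min_le_left _ _)))
        · exact h₂ u v (le_trans huv (le_trans (min_le_right _ _) (min_le_right _ _)))

end Aux2
section Core

variable {X : Type*} [MetricSpace X]

/-- Core forcing lemma: if `u` is a `δγ`-pseudo-orbit which coincides with the orbit of `x`
far away, stays within `ε - γ` of the orbit of `x`, and the asymptotic dynamical ball of `x`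
is trivial, then any `γ`-shadow of `u` must be `x` itself, so `u` is `γ`-close to the orbit. -/
private lemma core [CompactSpace X] (f : X ≃ₜ X) {ε γ δγ : ℝ} (hγ : 0 < γ)
    (hLγ : ∀ w : ℤ → X, (∀ k : ℤ, dist (f (w k)) (w (k+1)) ≤ δγ) →
      Tendsto (fun k : ℤ => dist (f (w k)) (w (k+1))) cofinite (nhds 0) →
      ∃ z : X, (∀ k : ℤ, dist (iterZ f k z) (w k) ≤ γ) ∧
        Tendsto (fun k : ℤ => dist (iterZ f k z) (w k)) cofinite (nhds 0))
    (x : X) (hH : Vs f ε x ∩ Vu f ε x = {x})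
    (u : ℤ → X) (T : ℤ) (hT : 0 ≤ T)
    (htail : ∀ k : ℤ, (k ≤ -T ∨ T ≤ k) → u k = iterZ f k x)
    (hhop : ∀ k : ℤ, dist (f (u k)) (u (k+1)) ≤ δγ)
    (htube : ∀ k : ℤ, dist (u k) (iterZ f k x) ≤ ε - γ) :
    ∀ k : ℤ, dist (u k) (iterZ f k x) ≤ γ := by
  -- errors vanish far out
  have herr : ∀ k : ℤ, k < -T ∨ T - 1 < k → dist (f (u k)) (u (k+1)) = 0 := by
    intro k hk
    have h1 : u k = iterZ f k x := by
      apply htail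
      rcases hk with h | h
      · left; omega
      · right; omega
    have h2 : u (k+1) = iterZ f (k+1) x := by
      apply htail
      rcases hk with h | h
      · left; omega
      · right; omega
    rw [h1, h2, iterZ_succ, dist_self]
  have htd : Tendsto (fun k : ℤ => dist (f (u k)) (u (k+1))) cofinite (nhds 0) :=
    tendsto_cofinite_of_bounded_support (-T) (T-1) herr
  obtain ⟨z, hz1, hz2⟩ := hLγ u hhop htd
  -- stable part
  have hstab : Tendsto (fun n : ℕ => dist ((⇑f)^[n] x) ((⇑f)^[n] z)) atTop (nhds 0) := by
    have hnat : Tendsto (fun n : ℕ => dist (iterZ f (n:ℤ) z) (u (n:ℤ))) atTop (nhds 0) :=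
      (tendsto_atTop_of_cofinite hz2).comp tendsto_natCast_atTop_atTop
    have hzero : Tendsto (fun n : ℕ => dist (u (n:ℤ)) (iterZ f (n:ℤ) x)) atTop (nhds 0) := by
      have hev : (fun _ : ℕ => (0:ℝ)) =ᶠ[atTop] (fun n : ℕ => dist (u (n:ℤ)) (iterZ f (n:ℤ) x)) := by
        filter_upwards [eventually_ge_atTop T.toNat] with n hn
        rw [htail (n:ℤ) (Or.inr (by omega)), dist_self]
      exact Filter.Tendsto.congr' hev tendsto_const_nhds
    have hsum : Tendsto (fun n : ℕ =>
        dist (iterZ f (n:ℤ) z) (u (n:ℤ)) + dist (u (n:ℤ)) (iterZ f (n:ℤ) x)) atTop (nhds 0) := by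
      simpa using hnat.add hzero
    apply squeeze_zero (fun n => dist_nonneg) _ hsum
    intro n
    rw [← iterZ_ofNat f n x, ← iterZ_ofNat f n z, dist_comm]
    exact dist_triangle _ _ _
  have hlocs : ∀ n : ℕ, dist ((⇑f)^[n] x) ((⇑f)^[n] z) ≤ ε := by
    intro n
    rw [← iterZ_ofNat f n x, ← iterZ_ofNat f n z]
    calc dist (iterZ f (n:ℤ) x) (iterZ f (n:ℤ) z)
        ≤ dist (iterZ f (n:ℤ) x) (u (n:ℤ)) + dist (u (n:ℤ)) (iterZ f (n:ℤ) z) := dist_triangle _ _ _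
      _ ≤ (ε - γ) + γ := by
          apply add_le_add
          · rw [dist_comm]; exact htube _
          · rw [dist_comm]; exact hz1 _
      _ = ε := by ring
  -- unstable part
  have hustab : Tendsto (fun n : ℕ => dist ((⇑f.symm)^[n] x) ((⇑f.symm)^[n] z)) atTop (nhds 0) := by
    have hnegmap : Tendsto (fun n : ℕ => -(n:ℤ)) atTop atBot :=
      tendsto_neg_atTop_atBot.comp tendsto_natCast_atTop_atTop
    have hnat : Tendsto (fun n : ℕ => dist (iterZ f (-(n:ℤ)) z) (u (-(n:ℤ)))) atTop (nhds 0) :=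
      (tendsto_atBot_of_cofinite hz2).comp hnegmap
    have hzero : Tendsto (fun n : ℕ => dist (u (-(n:ℤ))) (iterZ f (-(n:ℤ)) x)) atTop (nhds 0) := by
      have hev : (fun _ : ℕ => (0:ℝ)) =ᶠ[atTop]
          (fun n : ℕ => dist (u (-(n:ℤ))) (iterZ f (-(n:ℤ)) x)) := by
        filter_upwards [eventually_ge_atTop T.toNat] with n hn
        rw [htail (-(n:ℤ)) (Or.inl (by omega)), dist_self]
      exact Filter.Tendsto.congr' hev tendsto_const_nhds
    have hsum : Tendsto (fun n : ℕ =>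
        dist (iterZ f (-(n:ℤ)) z) (u (-(n:ℤ))) + dist (u (-(n:ℤ))) (iterZ f (-(n:ℤ)) x))
        atTop (nhds 0) := by
      simpa using hnat.add hzero
    apply squeeze_zero (fun n => dist_nonneg) _ hsum
    intro n
    rw [← iterZ_neg_ofNat f n x, ← iterZ_neg_ofNat f n z, dist_comm]
    exact dist_triangle _ _ _
  have hulocs : ∀ n : ℕ, dist ((⇑f.symm)^[n] x) ((⇑f.symm)^[n] z) ≤ ε := by
    intro n
    rw [← iterZ_neg_ofNat f n x, ← iterZ_neg_ofNat f n z]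
    calc dist (iterZ f (-(n:ℤ)) x) (iterZ f (-(n:ℤ)) z)
        ≤ dist (iterZ f (-(n:ℤ)) x) (u (-(n:ℤ))) + dist (u (-(n:ℤ))) (iterZ f (-(n:ℤ)) z) :=
          dist_triangle _ _ _
      _ ≤ (ε - γ) + γ := by
          apply add_le_add
          · rw [dist_comm]; exact htube _
          · rw [dist_comm]; exact hz1 _
      _ = ε := by ring
  have hmem : z ∈ Vs f ε x ∩ Vu f ε x := ⟨⟨hstab, hlocs⟩, ⟨hustab, hulocs⟩⟩
  rw [hH] at hmem
  have hzx : z = x := hmem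
  intro k
  have := hz1 k
  rw [hzx] at this
  rw [dist_comm]
  exact this

end Core
section Step2

variable {X : Type*} [MetricSpace X]

private lemma limsup_kill [CompactSpace X] (f : X ≃ₜ X) (hL : LShadowing f) {ε : ℝ}
    (hε : 0 < ε) (x : X) (hH : Vs f ε x ∩ Vu f ε x = {x}) {δ : ℝ} (hδpos : 0 < δ)
    (hδε : δ ≤ ε/8) (y : X) (hcomp : ∀ k : ℤ, dist (iterZ f k x) (iterZ f k y) ≤ δ)
    (hliminf : ∀ η : ℝ, 0 < η → ∀ N : ℤ, ∃ s, N ≤ s ∧ dist (iterZ f s x) (iterZ f s y) ≤ η) :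
    Tendsto (fun n : ℕ => dist ((⇑f)^[n] x) ((⇑f)^[n] y)) atTop (nhds 0) := by
  rw [Metric.tendsto_atTop]
  intro r hr
  by_contra hbad
  push_neg at hbad
  set γ := min (r/2) (ε/2) with hγdef
  have hγpos : 0 < γ := lt_min (by linarith) (by linarith)
  obtain ⟨δγ, hδγpos, hLγ⟩ := hL γ hγpos
  obtain ⟨θ, hθpos, hmod⟩ := window_modulus f 1 hδγpos
  have hηpos : (0:ℝ) < min θ δ := lt_min hθpos hδpos
  obtain ⟨s₁, hs₁0, hs₁⟩ := hliminf (min θ δ) hηpos 0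
  obtain ⟨n₀, hn₀, hcert0⟩ := hbad (s₁.toNat + 1)
  set t := (n₀ : ℤ) with htdef
  have hts₁ : s₁ + 1 ≤ t := by omega
  have hcert : r ≤ dist (iterZ f t x) (iterZ f t y) := by
    rw [Real.dist_eq, sub_zero, abs_of_nonneg dist_nonneg] at hcert0
    rw [htdef, iterZ_ofNat, iterZ_ofNat]
    exact hcert0
  obtain ⟨s₂, hs₂t, hs₂⟩ := hliminf (min θ δ) hηpos (t+1)
  set u : ℤ → X := fun k => if k ≤ s₁ then iterZ f k x
    else if k ≤ s₂ then iterZ f k y else iterZ f k x with hu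
  have hux_lo : ∀ k ≤ s₁, u k = iterZ f k x := by
    intro k hk; simp only [hu]; rw [if_pos hk]
  have huy : ∀ k, s₁ < k → k ≤ s₂ → u k = iterZ f k y := by
    intro k h1 h2; simp only [hu]; rw [if_neg (by omega), if_pos h2]
  have hux_hi : ∀ k, s₂ < k → u k = iterZ f k x := by
    intro k h; simp only [hu]; rw [if_neg (by omega), if_neg (by omega)]
  set T : ℤ := max (1 - s₁) (s₂ + 1) with hT
  have hT0 : 0 ≤ T := le_trans (by omega : (0:ℤ) ≤ s₂ + 1) (le_max_right _ _)
  have htail : ∀ k : ℤ, (k ≤ -T ∨ T ≤ k) → u k = iterZ f k x := by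
    intro k hk
    rcases hk with h | h
    · apply hux_lo
      have := le_max_left (1 - s₁) (s₂+1)
      omega
    · apply hux_hi
      have := le_max_right (1 - s₁) (s₂+1)
      omega
  -- boundary estimates
  have hbound : ∀ s : ℤ, dist (iterZ f s x) (iterZ f s y) ≤ θ →
      dist (iterZ f (s+1) x) (iterZ f (s+1) y) ≤ δγ := by
    intro s hd
    have happ := hmod _ _ hd 1 (by decide)
    rw [← iterZ_add f 1 s x, ← iterZ_add f 1 s y] at happ
    have h1 : (1:ℤ) + s = s + 1 := by ring
    rwa [h1] at happ
  have hhop : ∀ k : ℤ, dist (f (u k)) (u (k+1)) ≤ δγ := by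
    intro k
    by_cases h1 : k+1 ≤ s₁
    · rw [hux_lo k (by omega), hux_lo (k+1) h1, ← iterZ_succ, dist_self]; exact hδγpos.le
    · by_cases h2 : k ≤ s₁
      · have hk : k = s₁ := by omega
        rw [hux_lo k h2, huy (k+1) (by omega) (by omega), ← iterZ_succ]
        rw [hk]
        exact hbound s₁ (le_trans hs₁ (min_le_left _ _))
      · by_cases h3 : k+1 ≤ s₂
        · rw [huy k (by omega) (by omega), huy (k+1) (by omega) h3, ← iterZ_succ, dist_self]
          exact hδγpos.le
        · by_cases h4 : k ≤ s₂
          · have hk : k = s₂ := by omega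
            rw [huy k (by omega) h4, hux_hi (k+1) (by omega), ← iterZ_succ, dist_comm]
            rw [hk]
            exact hbound s₂ (le_trans hs₂ (min_le_left _ _))
          · rw [hux_hi k (by omega), hux_hi (k+1) (by omega), ← iterZ_succ, dist_self]
            exact hδγpos.le
  have htube : ∀ k : ℤ, dist (u k) (iterZ f k x) ≤ ε - γ := by
    intro k
    have hγε : γ ≤ ε/2 := min_le_right _ _
    by_cases h1 : k ≤ s₁
    · rw [hux_lo k h1, dist_self]; linarith
    · by_cases h2 : k ≤ s₂
      · rw [huy k (by omega) h2, dist_comm]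
        calc dist (iterZ f k x) (iterZ f k y) ≤ δ := hcomp k
          _ ≤ ε - γ := by linarith
      · rw [hux_hi k (by omega), dist_self]; linarith
  have hcore := core f hγpos hLγ x hH u T hT0 htail hhop htube t
  rw [huy t (by omega) (by omega), dist_comm] at hcore
  have h5 : r ≤ γ := le_trans hcert hcore
  have h6 : γ ≤ r/2 := min_le_left _ _
  linarith

end Step2
section Step1

variable {X : Type*} [MetricSpace X]

private lemma liminf_zero [CompactSpace X] (f : X ≃ₜ X) (hL : LShadowing f) {ε : ℝ}
    (hε : 0 < ε) {δ₀ : ℝ} (hδ₀pos : 0 < δ₀)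
    (hLδ₀ : ∀ w : ℤ → X, (∀ k : ℤ, dist (f (w k)) (w (k+1)) ≤ δ₀) →
      Tendsto (fun k : ℤ => dist (f (w k)) (w (k+1))) cofinite (nhds 0) →
      ∃ z : X, (∀ k : ℤ, dist (iterZ f k z) (w k) ≤ ε/8) ∧
        Tendsto (fun k : ℤ => dist (iterZ f k z) (w k)) cofinite (nhds 0))
    (x : X) (hH : Vs f ε x ∩ Vu f ε x = {x}) {δ : ℝ} (hδpos : 0 < δ) (hδδ₀ : δ ≤ δ₀)
    (hδε : δ ≤ ε/8) (y : X) (hcomp : ∀ k : ℤ, dist (iterZ f k x) (iterZ f k y) ≤ δ) :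
    ∀ η : ℝ, 0 < η → ∀ N : ℤ, ∃ s, N ≤ s ∧ dist (iterZ f s x) (iterZ f s y) ≤ η := by
  by_contra hbad
  push_neg at hbad
  obtain ⟨η, hηpos, N₀, hbad⟩ := hbad
  set η₁ := min η δ with hη₁def
  have hη₁pos : 0 < η₁ := lt_min hηpos hδpos
  have hη₁δ : η₁ ≤ δ := min_le_right _ _
  have hbad' : ∀ s, N₀ ≤ s → η₁ ≤ dist (iterZ f s x) (iterZ f s y) := fun s hs =>
    le_trans (min_le_left _ _) (hbad s hs).le
  -- a cluster point (a,b) of the pair orbit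
  obtain ⟨c, -, φ, hφ, hPc⟩ := IsCompact.tendsto_subseq
    (x := fun n : ℕ => ((iterZ f (N₀ + n) x, iterZ f (N₀ + n) y) : X × X))
    isCompact_univ (fun n => Set.mem_univ _)
  have hPa : Tendsto (fun n : ℕ => iterZ f (N₀ + φ n) x) atTop (nhds c.1) := by
    simpa [Function.comp_def] using (continuous_fst.tendsto c).comp hPc
  have hPb : Tendsto (fun n : ℕ => iterZ f (N₀ + φ n) y) atTop (nhds c.2) := by
    simpa [Function.comp_def] using (continuous_snd.tendsto c).comp hPc
  set a := c.1 with ha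
  set b := c.2 with hb
  -- visits
  have hvisit : ∀ θ : ℝ, 0 < θ → ∀ M : ℤ, ∃ m : ℤ, M ≤ m ∧ N₀ ≤ m ∧
      dist (iterZ f m x) a ≤ θ ∧ dist (iterZ f m y) b ≤ θ := by
    intro θ hθ M
    have h1 := Metric.tendsto_nhds.mp hPa θ hθ
    have h2 := Metric.tendsto_nhds.mp hPb θ hθ
    have h3 : ∀ᶠ n : ℕ in atTop, ((M - N₀).toNat ≤ n) := eventually_ge_atTop _
    obtain ⟨n, hn1, hn2, hn3⟩ := (h1.and (h2.and h3)).exists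
    have hφn : n ≤ φ n := hφ.le_apply
    exact ⟨N₀ + φ n, by omega, by omega, hn1.le, hn2.le⟩
  -- bounds on the pair (a, b)
  have hab : ∀ j : ℤ, η₁ ≤ dist (iterZ f j a) (iterZ f j b) ∧
      dist (iterZ f j a) (iterZ f j b) ≤ δ := by
    intro j
    have hcont : Continuous (fun p : X × X => dist (iterZ f j p.1) (iterZ f j p.2)) :=
      ((continuous_iterZ f j).comp continuous_fst).dist ((continuous_iterZ f j).comp continuous_snd)
    have htend : Tendsto (fun n : ℕ =>
        dist (iterZ f j (iterZ f (N₀ + φ n) x)) (iterZ f j (iterZ f (N₀ + φ n) y)))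
        atTop (nhds (dist (iterZ f j a) (iterZ f j b))) := by
      simpa [Function.comp_def] using (hcont.tendsto c).comp hPc
    constructor
    · apply ge_of_tendsto htend
      filter_upwards [eventually_ge_atTop j.natAbs] with n hn
      rw [← iterZ_add, ← iterZ_add]
      apply hbad'
      have hφn : n ≤ φ n := hφ.le_apply
      omega
    · apply le_of_tendsto htend
      filter_upwards with n
      rw [← iterZ_add, ← iterZ_add]
      exact hcomp _
  -- bridge ζ : from the orbit of a to the orbit of b
  set w₁ : ℤ → X := fun k => if k ≤ 0 then iterZ f k a else iterZ f k b with hw₁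
  have hw₁hop : ∀ k : ℤ, dist (f (w₁ k)) (w₁ (k+1)) ≤ δ₀ := by
    intro k
    by_cases h1 : k + 1 ≤ 0
    · simp only [hw₁]
      rw [if_pos (by omega : k ≤ 0), if_pos h1, ← iterZ_succ, dist_self]
      exact hδ₀pos.le
    · by_cases h2 : k ≤ 0
      · simp only [hw₁]
        rw [if_pos h2, if_neg h1, ← iterZ_succ]
        have hk : k = 0 := by omega
        rw [hk]
        exact le_trans (hab 1).2 hδδ₀
      · simp only [hw₁]
        rw [if_neg h2, if_neg h1, ← iterZ_succ, dist_self]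
        exact hδ₀pos.le
  have hw₁td : Tendsto (fun k : ℤ => dist (f (w₁ k)) (w₁ (k+1))) cofinite (nhds 0) := by
    apply tendsto_cofinite_of_bounded_support (-1) 1
    intro k hk
    simp only [hw₁]
    rcases hk with h | h
    · rw [if_pos (by omega : k ≤ 0), if_pos (by omega : k + 1 ≤ 0), ← iterZ_succ, dist_self]
    · rw [if_neg (by omega), if_neg (by omega), ← iterZ_succ, dist_self]
  obtain ⟨ζ, hζ1, hζ2⟩ := hLδ₀ w₁ hw₁hop hw₁td
  have hζa : ∀ k : ℤ, k ≤ 0 → dist (iterZ f k ζ) (iterZ f k a) ≤ ε/8 := by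
    intro k hk
    have := hζ1 k
    simp only [hw₁] at this
    rwa [if_pos hk] at this
  have hζb : ∀ k : ℤ, 1 ≤ k → dist (iterZ f k ζ) (iterZ f k b) ≤ ε/8 := by
    intro k hk
    have := hζ1 k
    simp only [hw₁] at this
    rwa [if_neg (by omega)] at this
  -- bridge ζ' : from the orbit of b to the orbit of a
  set w₂ : ℤ → X := fun k => if k ≤ 0 then iterZ f k b else iterZ f k a with hw₂
  have hw₂hop : ∀ k : ℤ, dist (f (w₂ k)) (w₂ (k+1)) ≤ δ₀ := by
    intro k
    by_cases h1 : k + 1 ≤ 0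
    · simp only [hw₂]
      rw [if_pos (by omega : k ≤ 0), if_pos h1, ← iterZ_succ, dist_self]
      exact hδ₀pos.le
    · by_cases h2 : k ≤ 0
      · simp only [hw₂]
        rw [if_pos h2, if_neg h1, ← iterZ_succ]
        have hk : k = 0 := by omega
        rw [hk, dist_comm]
        exact le_trans (hab 1).2 hδδ₀
      · simp only [hw₂]
        rw [if_neg h2, if_neg h1, ← iterZ_succ, dist_self]
        exact hδ₀pos.le
  have hw₂td : Tendsto (fun k : ℤ => dist (f (w₂ k)) (w₂ (k+1))) cofinite (nhds 0) := by
    apply tendsto_cofinite_of_bounded_support (-1) 1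
    intro k hk
    simp only [hw₂]
    rcases hk with h | h
    · rw [if_pos (by omega : k ≤ 0), if_pos (by omega : k + 1 ≤ 0), ← iterZ_succ, dist_self]
    · rw [if_neg (by omega), if_neg (by omega), ← iterZ_succ, dist_self]
  obtain ⟨ζ', hζ'1, hζ'2⟩ := hLδ₀ w₂ hw₂hop hw₂td
  have hζ'b : ∀ k : ℤ, k ≤ 0 → dist (iterZ f k ζ') (iterZ f k b) ≤ ε/8 := by
    intro k hk
    have := hζ'1 k
    simp only [hw₂] at this
    rwa [if_pos hk] at this
  have hζ'a : ∀ k : ℤ, 1 ≤ k → dist (iterZ f k ζ') (iterZ f k a) ≤ ε/8 := by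
    intro k hk
    have := hζ'1 k
    simp only [hw₂] at this
    rwa [if_neg (by omega)] at this
  -- fine scale
  set γs := min (η₁/8) (ε/8) with hγsdef
  have hγspos : 0 < γs := lt_min (by linarith) (by linarith)
  obtain ⟨δγ, hδγpos, hLγ⟩ := hL γs hγspos
  set τ := min (δγ/4) (η₁/8) with hτdef
  have hτpos : 0 < τ := lt_min (by linarith) (by linarith)
  have hτδγ : 2*τ ≤ δγ := by
    have := min_le_left (δγ/4) (η₁/8); linarith
  have hτη : τ ≤ η₁/8 := min_le_right _ _
  -- decay ranks of the bridges
  have hζa_tend : Tendsto (fun k : ℤ => dist (iterZ f k ζ) (iterZ f k a)) atBot (nhds 0) := by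
    apply Filter.Tendsto.congr' _ (tendsto_atBot_of_cofinite hζ2)
    filter_upwards [eventually_le_atBot (0:ℤ)] with k hk
    simp only [hw₁]
    rw [if_pos hk]
  have hζb_tend : Tendsto (fun k : ℤ => dist (iterZ f k ζ) (iterZ f k b)) atTop (nhds 0) := by
    apply Filter.Tendsto.congr' _ (tendsto_atTop_of_cofinite hζ2)
    filter_upwards [eventually_ge_atTop (1:ℤ)] with k hk
    simp only [hw₁]
    rw [if_neg (by omega)]
  have hζ'b_tend : Tendsto (fun k : ℤ => dist (iterZ f k ζ') (iterZ f k b)) atBot (nhds 0) := by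
    apply Filter.Tendsto.congr' _ (tendsto_atBot_of_cofinite hζ'2)
    filter_upwards [eventually_le_atBot (0:ℤ)] with k hk
    simp only [hw₂]
    rw [if_pos hk]
  have hζ'a_tend : Tendsto (fun k : ℤ => dist (iterZ f k ζ') (iterZ f k a)) atTop (nhds 0) := by
    apply Filter.Tendsto.congr' _ (tendsto_atTop_of_cofinite hζ'2)
    filter_upwards [eventually_ge_atTop (1:ℤ)] with k hk
    simp only [hw₂]
    rw [if_neg (by omega)]
  obtain ⟨A₁, hA₁0, hA₁'⟩ := rank_atBot hζa_tend hτpos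
  have hA₁ : ∀ k ≤ A₁, dist (iterZ f k ζ) (iterZ f k a) ≤ τ := by
    intro k hk
    have := hA₁' k hk
    rwa [abs_of_nonneg dist_nonneg] at this
  obtain ⟨A₂, hA₂1, hA₂'⟩ := rank_atTop hζb_tend hτpos
  have hA₂ : ∀ k, A₂ ≤ k → dist (iterZ f k ζ) (iterZ f k b) ≤ τ := by
    intro k hk
    have := hA₂' k hk
    rwa [abs_of_nonneg dist_nonneg] at this
  obtain ⟨A₃, hA₃0, hA₃'⟩ := rank_atBot hζ'b_tend hτpos
  have hA₃ : ∀ k ≤ A₃, dist (iterZ f k ζ') (iterZ f k b) ≤ τ := by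
    intro k hk
    have := hA₃' k hk
    rwa [abs_of_nonneg dist_nonneg] at this
  obtain ⟨A₄, hA₄1, hA₄'⟩ := rank_atTop hζ'a_tend hτpos
  have hA₄ : ∀ k, A₄ ≤ k → dist (iterZ f k ζ') (iterZ f k a) ≤ τ := by
    intro k hk
    have := hA₄' k hk
    rwa [abs_of_nonneg dist_nonneg] at this
  -- window modulus and two visits
  set W : ℕ := A₁.natAbs + A₂.natAbs + A₃.natAbs + A₄.natAbs + 5 with hW
  obtain ⟨θW, hθWpos, hmodW⟩ := window_modulus f W hτpos
  obtain ⟨m₁, hm₁M, hm₁N₀, hm₁a, hm₁b⟩ := hvisit θW hθWpos 0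
  obtain ⟨m₂, hm₂M, hm₂N₀, hm₂a, hm₂b⟩ := hvisit θW hθWpos (m₁ + W + W + 5)
  have hprop : ∀ (m : ℤ) (z' c' : X), dist (iterZ f m z') c' ≤ θW → ∀ j : ℤ, j.natAbs ≤ W →
      dist (iterZ f (j + m) z') (iterZ f j c') ≤ τ := by
    intro m z' c' hd j hj
    have := hmodW _ _ hd j hj
    rwa [← iterZ_add] at this
  -- the grand pseudo-orbit
  set e₀ : ℤ := m₁ + A₁ - 1 with he₀
  set e₁ : ℤ := m₁ + A₂ with he₁
  set ks : ℤ := m₁ + A₂ + 1 with hks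
  set e₂ : ℤ := m₂ + A₃ - 1 with he₂
  set e₃ : ℤ := m₂ + A₄ with he₃
  set u : ℤ → X := fun k =>
    if k ≤ e₀ then iterZ f k x
    else if k ≤ e₁ then iterZ f (k - m₁) ζ
    else if k = ks then iterZ f (k - m₁) b
    else if k ≤ e₂ then iterZ f k y
    else if k ≤ e₃ then iterZ f (k - m₂) ζ'
    else iterZ f k x with hu
  have hordW : (A₁.natAbs : ℤ) ≤ W ∧ (A₂.natAbs : ℤ) ≤ W ∧ (A₃.natAbs : ℤ) ≤ W ∧
      (A₄.natAbs : ℤ) ≤ W := by omega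
  have hord : e₀ < e₁ ∧ e₁ + 1 = ks ∧ ks + 1 ≤ e₂ ∧ e₂ < e₃ := by omega
  -- evaluation lemmas
  have hu_x_lo : ∀ k ≤ e₀, u k = iterZ f k x := by
    intro k hk; simp only [hu]; rw [if_pos hk]
  have hu_ζ : ∀ k, e₀ < k → k ≤ e₁ → u k = iterZ f (k - m₁) ζ := by
    intro k h1 h2; simp only [hu]; rw [if_neg (by omega), if_pos h2]
  have hu_b : u ks = iterZ f (ks - m₁) b := by
    simp only [hu]
    rw [if_neg (by omega : ¬ ks ≤ e₀), if_neg (by omega : ¬ ks ≤ e₁)]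
    simp
  have hu_y : ∀ k, ks < k → k ≤ e₂ → u k = iterZ f k y := by
    intro k h1 h2; simp only [hu]
    rw [if_neg (by omega), if_neg (by omega), if_neg (by omega), if_pos h2]
  have hu_ζ' : ∀ k, e₂ < k → k ≤ e₃ → u k = iterZ f (k - m₂) ζ' := by
    intro k h1 h2; simp only [hu]
    rw [if_neg (by omega), if_neg (by omega), if_neg (by omega), if_neg (by omega), if_pos h2]
  have hu_x_hi : ∀ k, e₃ < k → u k = iterZ f k x := by
    intro k h; simp only [hu]
    rw [if_neg (by omega), if_neg (by omega), if_neg (by omega), if_neg (by omega),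
      if_neg (by omega)]
  -- tails
  set T : ℤ := max (1 - e₀) (e₃ + 1) with hT
  have hT0 : 0 ≤ T := le_trans (by omega : (0:ℤ) ≤ e₃ + 1 - e₃) (by
    have := le_max_right (1 - e₀) (e₃ + 1); omega)
  have htail : ∀ k : ℤ, (k ≤ -T ∨ T ≤ k) → u k = iterZ f k x := by
    intro k hk
    have h1 := le_max_left (1 - e₀) (e₃ + 1)
    have h2 := le_max_right (1 - e₀) (e₃ + 1)
    rcases hk with h | h
    · exact hu_x_lo k (by omega)
    · exact hu_x_hi k (by omega)
  -- hop bounds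
  have hhop : ∀ k : ℤ, dist (f (u k)) (u (k+1)) ≤ δγ := by
    intro k
    by_cases c1 : k + 1 ≤ e₀
    · rw [hu_x_lo k (by omega), hu_x_lo (k+1) c1, ← iterZ_succ, dist_self]
      exact hδγpos.le
    · by_cases c2 : k ≤ e₀
      · -- x → ζ
        rw [hu_x_lo k c2, hu_ζ (k+1) (by omega) (by omega), ← iterZ_succ]
        have hk : k + 1 = A₁ + m₁ := by omega
        have hk2 : k + 1 - m₁ = A₁ := by omega
        rw [hk2, hk]
        calc dist (iterZ f (A₁ + m₁) x) (iterZ f A₁ ζ)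
            ≤ dist (iterZ f (A₁ + m₁) x) (iterZ f A₁ a) + dist (iterZ f A₁ a) (iterZ f A₁ ζ) :=
              dist_triangle _ _ _
          _ ≤ τ + τ := add_le_add (hprop m₁ x a hm₁a A₁ (by omega))
              (by rw [dist_comm]; exact hA₁ A₁ le_rfl)
          _ ≤ δγ := by linarith
      · by_cases c3 : k + 1 ≤ e₁
        · -- ζ interior
          rw [hu_ζ k (by omega) (by omega), hu_ζ (k+1) (by omega) c3]
          have hk : k + 1 - m₁ = (k - m₁) + 1 := by ring
          rw [hk, iterZ_succ, dist_self]
          exact hδγpos.le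
        · by_cases c4 : k ≤ e₁
          · -- ζ → b
            have hk : k = e₁ := by omega
            rw [hu_ζ k (by omega) c4, show k + 1 = ks by omega, hu_b]
            have h1 : ks - m₁ = A₂ + 1 := by omega
            have h2 : k - m₁ = A₂ := by omega
            rw [h1, h2, ← iterZ_succ]
            exact le_trans (hA₂ (A₂ + 1) (by omega)) (by linarith)
          · by_cases c5 : k = ks
            · -- b → y
              rw [c5, hu_b, hu_y (ks + 1) (by omega) (by omega)]
              have h1 : ks - m₁ = A₂ + 1 := by omega
              rw [h1, ← iterZ_succ]
              have h2 : ks + 1 = (A₂ + 2) + m₁ := by omega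
              rw [h2, dist_comm]
              have h3 : (A₂ + 1) + 1 = A₂ + 2 := by ring
              rw [h3]
              exact le_trans (hprop m₁ y b hm₁b (A₂ + 2) (by omega)) (by linarith)
            · by_cases c6 : k + 1 ≤ e₂
              · -- y interior
                rw [hu_y k (by omega) (by omega), hu_y (k+1) (by omega) c6, ← iterZ_succ,
                  dist_self]
                exact hδγpos.le
              · by_cases c7 : k ≤ e₂
                · -- y → ζ'
                  have hk : k = e₂ := by omega
                  rw [hu_y k (by omega) c7, hu_ζ' (k+1) (by omega) (by omega), ← iterZ_succ]
                  have h1 : k + 1 - m₂ = A₃ := by omega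
                  have h2 : k + 1 = A₃ + m₂ := by omega
                  rw [h1, h2]
                  calc dist (iterZ f (A₃ + m₂) y) (iterZ f A₃ ζ')
                      ≤ dist (iterZ f (A₃ + m₂) y) (iterZ f A₃ b) +
                        dist (iterZ f A₃ b) (iterZ f A₃ ζ') := dist_triangle _ _ _
                    _ ≤ τ + τ := add_le_add (hprop m₂ y b hm₂b A₃ (by omega))
                        (by rw [dist_comm]; exact hA₃ A₃ le_rfl)
                    _ ≤ δγ := by linarith
                · by_cases c8 : k + 1 ≤ e₃
                  · -- ζ' interior
                    rw [hu_ζ' k (by omega) (by omega), hu_ζ' (k+1) (by omega) c8]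
                    have hk : k + 1 - m₂ = (k - m₂) + 1 := by ring
                    rw [hk, iterZ_succ, dist_self]
                    exact hδγpos.le
                  · by_cases c9 : k ≤ e₃
                    · -- ζ' → x
                      have hk : k = e₃ := by omega
                      rw [hu_ζ' k (by omega) c9, hu_x_hi (k+1) (by omega)]
                      have h1 : k - m₂ = A₄ := by omega
                      rw [h1, ← iterZ_succ]
                      have h2 : k + 1 = (A₄ + 1) + m₂ := by omega
                      rw [h2]
                      calc dist (iterZ f (A₄ + 1) ζ') (iterZ f ((A₄ + 1) + m₂) x)
                          ≤ dist (iterZ f (A₄ + 1) ζ') (iterZ f (A₄ + 1) a) +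
                            dist (iterZ f (A₄ + 1) a) (iterZ f ((A₄ + 1) + m₂) x) :=
                            dist_triangle _ _ _
                        _ ≤ τ + τ := add_le_add (hA₄ (A₄ + 1) (by omega))
                            (by rw [dist_comm]; exact hprop m₂ x a hm₂a (A₄ + 1) (by omega))
                        _ ≤ δγ := by linarith
                    · rw [hu_x_hi k (by omega), hu_x_hi (k+1) (by omega), ← iterZ_succ,
                        dist_self]
                      exact hδγpos.le
  -- tube bounds
  have hτε : τ ≤ ε/8 := by
    have h1 : η₁ ≤ ε/8 := le_trans hη₁δ hδε
    linarith
  have hγsε : γs ≤ ε/8 := min_le_right _ _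
  have htube : ∀ k : ℤ, dist (u k) (iterZ f k x) ≤ ε - γs := by
    intro k
    by_cases c1 : k ≤ e₀
    · rw [hu_x_lo k c1, dist_self]; linarith
    · by_cases c2 : k ≤ e₁
      · rw [hu_ζ k (by omega) c2]
        by_cases hj : k - m₁ ≤ 0
        · calc dist (iterZ f (k - m₁) ζ) (iterZ f k x)
              ≤ dist (iterZ f (k - m₁) ζ) (iterZ f (k - m₁) a) +
                dist (iterZ f (k - m₁) a) (iterZ f k x) := dist_triangle _ _ _
            _ ≤ ε/8 + τ := by
                apply add_le_add (hζa _ hj)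
                have hp := hprop m₁ x a hm₁a (k - m₁) (by omega)
                rw [show k - m₁ + m₁ = k from by ring] at hp
                rw [dist_comm]
                exact hp
            _ ≤ ε - γs := by linarith
        · calc dist (iterZ f (k - m₁) ζ) (iterZ f k x)
              ≤ dist (iterZ f (k - m₁) ζ) (iterZ f (k - m₁) b) +
                (dist (iterZ f (k - m₁) b) (iterZ f k y) + dist (iterZ f k y) (iterZ f k x)) := by
                  have t1 := dist_triangle (iterZ f (k - m₁) ζ) (iterZ f (k - m₁) b) (iterZ f k x)
                  have t2 := dist_triangle (iterZ f (k - m₁) b) (iterZ f k y) (iterZ f k x)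
                  linarith
            _ ≤ ε/8 + (τ + δ) := by
                apply add_le_add (hζb _ (by omega))
                apply add_le_add
                · have hp := hprop m₁ y b hm₁b (k - m₁) (by omega)
                  rw [show k - m₁ + m₁ = k from by ring] at hp
                  rw [dist_comm]
                  exact hp
                · rw [dist_comm]; exact hcomp k
            _ ≤ ε - γs := by linarith
      · by_cases c3 : k = ks
        · rw [c3, hu_b]
          calc dist (iterZ f (ks - m₁) b) (iterZ f ks x)
              ≤ dist (iterZ f (ks - m₁) b) (iterZ f ks y) + dist (iterZ f ks y) (iterZ f ks x) :=
                dist_triangle _ _ _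
            _ ≤ τ + δ := by
                apply add_le_add
                · have hp := hprop m₁ y b hm₁b (ks - m₁) (by omega)
                  rw [show ks - m₁ + m₁ = ks from by ring] at hp
                  rw [dist_comm]
                  exact hp
                · rw [dist_comm]; exact hcomp ks
            _ ≤ ε - γs := by linarith
        · by_cases c4 : k ≤ e₂
          · rw [hu_y k (by omega) c4, dist_comm]
            calc dist (iterZ f k x) (iterZ f k y) ≤ δ := hcomp k
              _ ≤ ε - γs := by linarith
          · by_cases c5 : k ≤ e₃
            · rw [hu_ζ' k (by omega) c5]
              by_cases hj : k - m₂ ≤ 0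
              · calc dist (iterZ f (k - m₂) ζ') (iterZ f k x)
                    ≤ dist (iterZ f (k - m₂) ζ') (iterZ f (k - m₂) b) +
                      (dist (iterZ f (k - m₂) b) (iterZ f k y) +
                        dist (iterZ f k y) (iterZ f k x)) := by
                        have t1 := dist_triangle (iterZ f (k - m₂) ζ') (iterZ f (k - m₂) b)
                          (iterZ f k x)
                        have t2 := dist_triangle (iterZ f (k - m₂) b) (iterZ f k y) (iterZ f k x)
                        linarith
                  _ ≤ ε/8 + (τ + δ) := by
                      apply add_le_add (hζ'b _ hj)
                      apply add_le_add
                      · have hp := hprop m₂ y b hm₂b (k - m₂) (by omega)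
                        rw [show k - m₂ + m₂ = k from by ring] at hp
                        rw [dist_comm]
                        exact hp
                      · rw [dist_comm]; exact hcomp k
                  _ ≤ ε - γs := by linarith
              · calc dist (iterZ f (k - m₂) ζ') (iterZ f k x)
                    ≤ dist (iterZ f (k - m₂) ζ') (iterZ f (k - m₂) a) +
                      dist (iterZ f (k - m₂) a) (iterZ f k x) := dist_triangle _ _ _
                  _ ≤ ε/8 + τ := by
                      apply add_le_add (hζ'a _ (by omega))
                      have hp := hprop m₂ x a hm₂a (k - m₂) (by omega)
                      rw [show k - m₂ + m₂ = k from by ring] at hp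
                      rw [dist_comm]
                      exact hp
                  _ ≤ ε - γs := by linarith
            · rw [hu_x_hi k (by omega), dist_self]; linarith
  -- apply the core lemma and derive the contradiction at the certificate time
  have hcore := core f hγspos hLγ x hH u T hT0 htail hhop htube ks
  rw [hu_b] at hcore
  have h1 : ks - m₁ = A₂ + 1 := by omega
  rw [h1] at hcore
  -- lower bound
  have h2 : ks = (A₂ + 1) + m₁ := by omega
  have hlow : η₁ - τ ≤ dist (iterZ f (A₂ + 1) b) (iterZ f ks x) := by
    have t1 := dist_triangle (iterZ f (A₂ + 1) a) (iterZ f ks x) (iterZ f (A₂ + 1) b)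
    have t2 : dist (iterZ f (A₂ + 1) a) (iterZ f ks x) ≤ τ := by
      rw [h2]
      rw [dist_comm]
      exact hprop m₁ x a hm₁a (A₂ + 1) (by omega)
    have t3 := (hab (A₂ + 1)).1
    have t4 : dist (iterZ f ks x) (iterZ f (A₂ + 1) b) =
        dist (iterZ f (A₂ + 1) b) (iterZ f ks x) := dist_comm _ _
    linarith
  have hits : γs ≤ η₁/8 := min_le_left _ _
  linarith

end Step1
section Symm

variable {X : Type*} [MetricSpace X]

private lemma iterZ_one (f : X ≃ₜ X) (p : X) : iterZ f 1 p = f p := by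
  have := iterZ_succ f 0 p
  rwa [zero_add, iterZ_zero] at this

private lemma lshadowing_symm [CompactSpace X] (f : X ≃ₜ X) (hL : LShadowing f) :
    LShadowing f.symm := by
  intro ε hε
  obtain ⟨δ, hδpos, hδ⟩ := hL ε hε
  obtain ⟨θ, hθpos, hmod⟩ := window_modulus f 1 hδpos
  refine ⟨min θ δ, lt_min hθpos hδpos, ?_⟩
  intro v hv1 hv2
  set u : ℤ → X := fun k => v (-k) with hudef
  -- transfer of one error estimate
  have key : ∀ (θ' δ' : ℝ),
      (∀ p q : X, dist p q ≤ θ' → dist (iterZ f 1 p) (iterZ f 1 q) ≤ δ') →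
      ∀ k : ℤ, dist (f.symm (v (-k-1))) (v (-k)) ≤ θ' →
      dist (f (u k)) (u (k+1)) ≤ δ' := by
    intro θ' δ' hmod' k hk
    have he : dist (v (-k)) (f.symm (v (-k-1))) ≤ θ' := by rw [dist_comm]; exact hk
    have h2 := hmod' _ _ he
    rw [iterZ_one, iterZ_one, Homeomorph.apply_symm_apply] at h2
    show dist (f (u k)) (u (k+1)) ≤ δ'
    simp only [hudef]
    have hj : -(k+1) = -k-1 := by ring
    rw [hj]
    exact h2
  have herr_le : ∀ k : ℤ, dist (f (u k)) (u (k+1)) ≤ δ := by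
    intro k
    apply key θ δ (fun p q h => hmod p q h 1 (by decide)) k
    have := hv1 (-k-1)
    have hj : (-k-1) + 1 = -k := by ring
    rw [hj] at this
    exact le_trans this (min_le_left _ _)
  have herr_td : Tendsto (fun k : ℤ => dist (f (u k)) (u (k+1))) cofinite (nhds 0) := by
    rw [Metric.tendsto_nhds]
    intro ρ hρ
    obtain ⟨θρ, hθρpos, hmodρ⟩ := window_modulus f 1 (half_pos hρ)
    have hev : ∀ᶠ j in (cofinite : Filter ℤ),
        dist (f.symm (v j)) (v (j+1)) < θρ := by
      have := Metric.tendsto_nhds.mp hv2 θρ hθρpos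
      filter_upwards [this] with j hj
      rw [Real.dist_eq, sub_zero, abs_of_nonneg dist_nonneg] at hj
      exact hj
    have hinj : Function.Injective (fun k : ℤ => -k-1) := by
      intro p q h
      simp only at h
      omega
    have hev2 : ∀ᶠ k in (cofinite : Filter ℤ),
        dist (f.symm (v (-k-1))) (v (-k-1+1)) < θρ := hinj.tendsto_cofinite.eventually hev
    filter_upwards [hev2] with k hk
    rw [Real.dist_eq, sub_zero, abs_of_nonneg dist_nonneg]
    have hj : (-k-1) + 1 = -k := by ring
    rw [hj] at hk
    have := key θρ (ρ/2) (fun p q h => hmodρ p q h 1 (by decide)) k hk.le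
    linarith
  obtain ⟨z, hz1, hz2⟩ := hδ u herr_le herr_td
  have hval : ∀ k : ℤ, iterZ f.symm k z = iterZ f (-k) z := fun k => iterZ_symm f k z
  have huv : ∀ k : ℤ, u (-k) = v k := by
    intro k
    simp only [hudef]
    rw [neg_neg]
  refine ⟨z, ?_, ?_⟩
  · intro k
    rw [hval k, ← huv k]
    exact hz1 (-k)
  · have hneg : Function.Injective (fun k : ℤ => -k) := fun p q h => by
      simp only at h; omega
    have := hz2.comp hneg.tendsto_cofinite
    apply this.congr
    intro k
    simp only [Function.comp]
    rw [hval k, ← huv k]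

end Symm
section Forward

variable {X : Type*} [MetricSpace X]

private lemma forward [CompactSpace X] (f : X ≃ₜ X) (hL : LShadowing f) {ε : ℝ} (hε : 0 < ε) :
    ∃ δ : ℝ, 0 < δ ∧ ∀ x : X, Vs f ε x ∩ Vu f ε x = {x} → ∀ y : X,
      (∀ k : ℤ, dist (iterZ f k x) (iterZ f k y) ≤ δ) →
      Tendsto (fun n : ℕ => dist ((⇑f)^[n] x) ((⇑f)^[n] y)) atTop (nhds 0) := by
  obtain ⟨δ₀, hδ₀pos, hLδ₀⟩ := hL (ε/8) (by positivity)
  have hδpos : 0 < min δ₀ (ε/8) := lt_min hδ₀pos (by positivity)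
  refine ⟨min δ₀ (ε/8), hδpos, fun x hH y hcomp => ?_⟩
  have h1 := liminf_zero f hL hε hδ₀pos hLδ₀ x hH hδpos (min_le_left _ _)
    (min_le_right _ _) y hcomp
  exact limsup_kill f hL hε x hH hδpos (min_le_right _ _) y hcomp h1

end Forward
/-- trivial asymptotic dynamical ball implies trivial dynamical ball. -/
theorem dynBall_trivial_of_asymp_trivial [CompactSpace X] (f : X ≃ₜ X)
    (hL : LShadowing f) :
    ∀ ε > (0:ℝ), ∃ δ > (0:ℝ), ∀ x : X,
      Vs f ε x ∩ Vu f ε x = {x} → dynBall f δ x = {x} := by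
  intro ε hε
  obtain ⟨δ₁, hδ₁pos, H₁⟩ := forward f hL hε
  obtain ⟨δ₂, hδ₂pos, H₂⟩ := forward f.symm (lshadowing_symm f hL) hε
  refine ⟨min (min δ₁ δ₂) ε, by positivity, fun x hH => ?_⟩
  ext y
  simp only [dynBall, Set.mem_setOf_eq, Set.mem_singleton_iff]
  constructor
  · intro hy
    have hyδ₁ : ∀ k : ℤ, dist (iterZ f k x) (iterZ f k y) ≤ δ₁ := fun k =>
      le_trans (hy k) (le_trans (min_le_left _ _) (min_le_left _ _))
    have hyδ₂ : ∀ k : ℤ, dist (iterZ f.symm k x) (iterZ f.symm k y) ≤ δ₂ := fun k => by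
      rw [iterZ_symm, iterZ_symm]
      exact le_trans (hy (-k)) (le_trans (min_le_left _ _) (min_le_right _ _))
    have hyε : ∀ k : ℤ, dist (iterZ f k x) (iterZ f k y) ≤ ε := fun k =>
      le_trans (hy k) (min_le_right _ _)
    have hH' : Vs f.symm ε x ∩ Vu f.symm ε x = {x} := by
      have e1 : Vu f.symm ε x = Vs f ε x := by
        simp only [Vu, unstableSet, localUnstable, Homeomorph.symm_symm, Vs]
      have e2 : Vs f.symm ε x = Vu f ε x := rfl
      rw [e1, e2, Set.inter_comm]
      exact hH
    have h1 := H₁ x hH y hyδ₁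
    have h2 := H₂ x hH' y hyδ₂
    have hmem : y ∈ Vs f ε x ∩ Vu f ε x := by
      refine ⟨⟨h1, fun n => ?_⟩, ⟨h2, fun n => ?_⟩⟩
      · rw [← iterZ_ofNat f n x, ← iterZ_ofNat f n y]
        exact hyε n
      · rw [← iterZ_neg_ofNat f n x, ← iterZ_neg_ofNat f n y]
        exact hyε (-(n:ℤ))
    rw [hH] at hmem
    exact hmem
  · rintro rfl
    intro k
    rw [dist_self]
    positivity
end
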